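/- arXiv:math/9807090 — 7 statements merged into one kernel-verified Lean document; each statement's English description precedes it below -/
import Mathlib

section
/- Let P and Q be real Banach spaces, let a : P → P be a continuous linear automorphism with continuous inverse a⁻¹, and let b : Q → P, c : P → Q, d : Q → Q, and T : P → Q be continuous linear maps. Let δ > 0 with ‖T‖ ≤ δ and suppose ‖a⁻¹‖·‖b‖·δ < 1. Then the continuous linear map a + b∘T : P → P is invertible with continuous inverse satisfying ‖(a + b∘T)⁻¹‖ ≤ ‖a⁻¹‖ / (1 − ‖a⁻¹‖·‖b‖·δ), and the operator Λ(T) := (c + d∘T) ∘ (a + b∘T)⁻¹ : P → Q satisfies ‖Λ(T)‖ ≤ (‖c‖ + ‖d‖·δ)·‖a⁻¹‖ / (1 − ‖a⁻¹‖·‖b‖·δ). In particular, if (‖c‖ + ‖d‖·δ)·‖a⁻¹‖ / (1 − ‖a⁻¹‖·‖b‖·δ) ≤ δ, then ‖Λ(T)‖ ≤ δ. -/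
/-! Factor `a + b ∘ T = a ∘ (1 + a⁻¹ ∘ b ∘ T)`. The perturbation `a⁻¹ ∘ b ∘ T` has norm at most
`κ = ‖a⁻¹‖ ‖b‖ δ < 1`, so the Neumann series inverts `1 + a⁻¹ ∘ b ∘ T` with norm at most
`(1 - κ)⁻¹`, whence `‖(a + b ∘ T)⁻¹‖ ≤ ‖a⁻¹‖ / (1 - κ)`. The bound on `Λ(T)` follows by
submultiplicativity from `‖c + d ∘ T‖ ≤ ‖c‖ + ‖d‖ δ`. -/

theorem Units.norm_inv_oneSub_le {R : Type*} [NormedRing R] [HasSummableGeomSeries R]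
    (h₁ : ‖(1 : R)‖ ≤ 1) (t : R) (ht : ‖t‖ < 1) :
    ‖(↑(Units.oneSub t ht)⁻¹ : R)‖ ≤ (1 - ‖t‖)⁻¹ :=
  (tsum_geometric_le_of_norm_lt_one t ht).trans (by linarith)

namespace ContinuousLinearEquiv

variable {𝕜 E F : Type*} [NontriviallyNormedField 𝕜] [NormedAddCommGroup E] [NormedSpace 𝕜 E]
  [CompleteSpace E] [NormedAddCommGroup F] [NormedSpace 𝕜 F]

theorem exists_eq_add_of_norm_symm_mul_norm_le (a : E ≃L[𝕜] F) (p : E →L[𝕜] F) {κ : ℝ}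
    (hp : ‖(a.symm : F →L[𝕜] E)‖ * ‖p‖ ≤ κ) (hκ : κ < 1) :
    ∃ e : E ≃L[𝕜] F, (e : E →L[𝕜] F) = a + p ∧
      ‖(e.symm : F →L[𝕜] E)‖ ≤ ‖(a.symm : F →L[𝕜] E)‖ / (1 - κ) := by
  set u : E →L[𝕜] E := -(a.symm : F →L[𝕜] E).comp p
  have hu : ‖u‖ ≤ κ := by
    rw [norm_neg]
    exact (ContinuousLinearMap.opNorm_comp_le _ _).trans hp
  set w := Units.oneSub u (hu.trans_lt hκ)
  refine ⟨(ofUnit w).trans a, ?_, ?_⟩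
  · ext x
    change a ((w : E →L[𝕜] E) x) = a x + p x
    simp [w, u]
  · have hw : ‖(↑w⁻¹ : E →L[𝕜] E)‖ ≤ (1 - κ)⁻¹ :=
      (Units.norm_inv_oneSub_le ContinuousLinearMap.norm_id_le u _).trans
        (inv_anti₀ (by linarith) (by linarith))
    calc ‖(((ofUnit w).trans a).symm : F →L[𝕜] E)‖
        = ‖(↑w⁻¹ : E →L[𝕜] E).comp (a.symm : F →L[𝕜] E)‖ := rfl
      _ ≤ (1 - κ)⁻¹ * ‖(a.symm : F →L[𝕜] E)‖ :=
        (ContinuousLinearMap.opNorm_comp_le _ _).trans (by gcongr)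
      _ = ‖(a.symm : F →L[𝕜] E)‖ / (1 - κ) := by rw [inv_mul_eq_div]

end ContinuousLinearEquiv

theorem graph_transform_derivative_bound_general
    {P Q : Type*} [NormedAddCommGroup P] [NormedSpace ℝ P] [CompleteSpace P]
    [NormedAddCommGroup Q] [NormedSpace ℝ Q] [CompleteSpace Q]
    (a : P ≃L[ℝ] P) (b : Q →L[ℝ] P) (c : P →L[ℝ] Q) (d : Q →L[ℝ] Q)
    (T : P →L[ℝ] Q) (δ : ℝ) (hT : ‖T‖ ≤ δ)
    (hsmall : ‖(a.symm : P →L[ℝ] P)‖ * ‖b‖ * δ < 1) :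
    ∃ e : P ≃L[ℝ] P,
      (e : P →L[ℝ] P) = (a : P →L[ℝ] P) + b.comp T ∧
      ‖(e.symm : P →L[ℝ] P)‖ ≤
        ‖(a.symm : P →L[ℝ] P)‖ / (1 - ‖(a.symm : P →L[ℝ] P)‖ * ‖b‖ * δ) ∧
      ‖(c + d.comp T).comp (e.symm : P →L[ℝ] P)‖ ≤
        (‖c‖ + ‖d‖ * δ) * ‖(a.symm : P →L[ℝ] P)‖ /
          (1 - ‖(a.symm : P →L[ℝ] P)‖ * ‖b‖ * δ) ∧
      ((‖c‖ + ‖d‖ * δ) * ‖(a.symm : P →L[ℝ] P)‖ /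
          (1 - ‖(a.symm : P →L[ℝ] P)‖ * ‖b‖ * δ) ≤ δ →
        ‖(c + d.comp T).comp (e.symm : P →L[ℝ] P)‖ ≤ δ) := by
  have hδ : 0 ≤ δ := (norm_nonneg T).trans hT
  have hbT : ‖b.comp T‖ ≤ ‖b‖ * δ := (b.opNorm_comp_le T).trans (by gcongr)
  have hdT : ‖d.comp T‖ ≤ ‖d‖ * δ := (d.opNorm_comp_le T).trans (by gcongr)
  obtain ⟨e, he, he_symm⟩ :=
    a.exists_eq_add_of_norm_symm_mul_norm_le (b.comp T) (by rw [mul_assoc]; gcongr) hsmall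
  have hΛ : ‖(c + d.comp T).comp (e.symm : P →L[ℝ] P)‖ ≤
      (‖c‖ + ‖d‖ * δ) * ‖(a.symm : P →L[ℝ] P)‖ / (1 - ‖(a.symm : P →L[ℝ] P)‖ * ‖b‖ * δ) := by
    rw [mul_div_assoc]
    exact ((c + d.comp T).opNorm_comp_le _).trans <|
      mul_le_mul ((norm_add_le _ _).trans (by gcongr)) he_symm (norm_nonneg _) (by positivity)
  exact ⟨e, he, he_symm, hΛ, hΛ.trans⟩

/-- If `a : P → P` is a continuous linear automorphism,
`b, c, d, T` continuous linear maps with `‖T‖ ≤ δ` and `‖a⁻¹‖·‖b‖·δ < 1`, then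
`a + b∘T` is invertible with `‖(a + b∘T)⁻¹‖ ≤ ‖a⁻¹‖/(1 − ‖a⁻¹‖·‖b‖·δ)`, and
`Λ(T) = (c + d∘T)∘(a + b∘T)⁻¹` satisfies
`‖Λ(T)‖ ≤ (‖c‖ + ‖d‖·δ)·‖a⁻¹‖/(1 − ‖a⁻¹‖·‖b‖·δ)`; in particular if this bound is `≤ δ`
then `‖Λ(T)‖ ≤ δ`. -/
theorem graph_transform_derivative_bound
    {P Q : Type*} [NormedAddCommGroup P] [NormedSpace ℝ P] [CompleteSpace P]
    [NormedAddCommGroup Q] [NormedSpace ℝ Q] [CompleteSpace Q]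
    (a : P ≃L[ℝ] P) (b : Q →L[ℝ] P) (c : P →L[ℝ] Q) (d : Q →L[ℝ] Q)
    (T : P →L[ℝ] Q) (δ : ℝ) (hδ : 0 < δ) (hT : ‖T‖ ≤ δ)
    (hsmall : ‖(a.symm : P →L[ℝ] P)‖ * ‖b‖ * δ < 1) :
    ∃ e : P ≃L[ℝ] P,
      (e : P →L[ℝ] P) = (a : P →L[ℝ] P) + b.comp T ∧
      ‖(e.symm : P →L[ℝ] P)‖ ≤
        ‖(a.symm : P →L[ℝ] P)‖ / (1 - ‖(a.symm : P →L[ℝ] P)‖ * ‖b‖ * δ) ∧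
      ‖(c + d.comp T).comp (e.symm : P →L[ℝ] P)‖ ≤
        (‖c‖ + ‖d‖ * δ) * ‖(a.symm : P →L[ℝ] P)‖ /
          (1 - ‖(a.symm : P →L[ℝ] P)‖ * ‖b‖ * δ) ∧
      ((‖c‖ + ‖d‖ * δ) * ‖(a.symm : P →L[ℝ] P)‖ /
          (1 - ‖(a.symm : P →L[ℝ] P)‖ * ‖b‖ * δ) ≤ δ →
        ‖(c + d.comp T).comp (e.symm : P →L[ℝ] P)‖ ≤ δ) :=
  graph_transform_derivative_bound_general a b c d T δ hT hsmall
end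

section
/- Let P and Q be real Banach spaces, let a : P → P be a continuous linear automorphism with continuous inverse a⁻¹, and let b : Q → P, c : P → Q, d : Q → Q be continuous linear maps. Let δ > 0 satisfy ‖a⁻¹‖·‖b‖·δ < 1 and (‖c‖ + ‖d‖·δ)·‖a⁻¹‖ / (1 − ‖a⁻¹‖·‖b‖·δ) ≤ δ. For a continuous linear map T : P → Q with ‖T‖ ≤ δ set Λ(T) := (c + d∘T) ∘ (a + b∘T)⁻¹. Then for all continuous linear maps T, S : P → Q with ‖T‖ ≤ δ and ‖S‖ ≤ δ one has ‖Λ(T) − Λ(S)‖ ≤ (δ·‖b‖ + ‖d‖) · (‖a⁻¹‖ / (1 − ‖a⁻¹‖·‖b‖·δ)) · ‖T − S‖. In particular, if (δ·‖b‖ + ‖d‖)·‖a⁻¹‖ / (1 − ‖a⁻¹‖·‖b‖·δ) < 1, then Λ is a contraction on the set of continuous linear maps T : P → Q with ‖T‖ ≤ δ. -/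
/-! A perturbation `a + B` of an isomorphism with `‖a⁻¹‖‖B‖ < 1` is again an isomorphism
(Neumann series for `1 + a⁻¹B`), and `‖x‖ ≤ ‖a⁻¹‖(‖(a + B)x‖ + ‖B‖‖x‖)` bounds its inverse by
`‖a⁻¹‖ / (1 - ‖a⁻¹‖‖B‖)`. The resolvent-type identity
`X e⁻¹ - Y f⁻¹ = (X e⁻¹ (f - e) + (X - Y)) f⁻¹`, with `X = c + dT`, `Y = c + dS`, `e = a + bT`,
`f = a + bS`, then gives the Lipschitz estimate, once `‖Λ(T)‖ = ‖X e⁻¹‖ ≤ δ` is known; the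
latter is exactly what the second smallness assumption provides. -/

section

open ContinuousLinearMap

variable {𝕜 E F G : Type*} [NontriviallyNormedField 𝕜]
  [NormedAddCommGroup E] [NormedSpace 𝕜 E] [NormedAddCommGroup F] [NormedSpace 𝕜 F]
  [NormedAddCommGroup G] [NormedSpace 𝕜 G]

namespace ContinuousLinearEquiv

theorem exists_coe_eq_add [CompleteSpace E] (a : E ≃L[𝕜] F) (B : E →L[𝕜] F)
    (h : ‖(a.symm : F →L[𝕜] E)‖ * ‖B‖ < 1) :
    ∃ e : E ≃L[𝕜] F, (e : E →L[𝕜] F) = a + B := by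
  have hsmall : ‖-(a.symm : F →L[𝕜] E).comp B‖ < 1 :=
    (norm_neg _).trans_lt ((opNorm_comp_le _ _).trans_lt h)
  refine ⟨(unitsEquiv 𝕜 E (Units.oneSub _ hsmall)).trans a, ?_⟩
  ext x
  simp

theorem norm_symm_le_of_coe_eq_add (a e : E ≃L[𝕜] F) (B : E →L[𝕜] F)
    (he : (e : E →L[𝕜] F) = a + B) {β : ℝ} (hB : ‖B‖ ≤ β)
    (hβ : ‖(a.symm : F →L[𝕜] E)‖ * β < 1) :
    ‖(e.symm : F →L[𝕜] E)‖ ≤ ‖(a.symm : F →L[𝕜] E)‖ / (1 - ‖(a.symm : F →L[𝕜] E)‖ * β) := by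
  set α := ‖(a.symm : F →L[𝕜] E)‖
  have hgap : 0 < 1 - α * β := sub_pos.mpr hβ
  refine opNorm_le_bound _ (by positivity) fun y => ?_
  set x := e.symm y
  have hx : x = a.symm (y - B x) := by
    have hex : a x + B x = y := by
      simpa [x] using (congrArg (· x) he).symm
    rw [a.eq_symm_apply, ← hex, add_sub_cancel_right]
  have hxy : ‖x‖ ≤ α * ‖y‖ + α * β * ‖x‖ := calc
    ‖x‖ ≤ α * ‖y - B x‖ := by
      conv_lhs => rw [hx]
      exact (a.symm : F →L[𝕜] E).le_opNorm _
    _ ≤ α * (‖y‖ + β * ‖x‖) := by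
      gcongr
      exact (norm_sub_le _ _).trans (by gcongr; exact (B.le_opNorm x).trans (by gcongr))
    _ = α * ‖y‖ + α * β * ‖x‖ := by ring
  rw [div_mul_eq_mul_div, le_div_iff₀ hgap]
  change ‖x‖ * (1 - α * β) ≤ α * ‖y‖
  linarith

theorem comp_symm_sub_comp_symm (X Y : E →L[𝕜] G) (e f : E ≃L[𝕜] F) :
    X.comp (e.symm : F →L[𝕜] E) - Y.comp (f.symm : F →L[𝕜] E) =
      ((X.comp (e.symm : F →L[𝕜] E)).comp ((f : E →L[𝕜] F) - (e : E →L[𝕜] F)) + (X - Y)).comp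
        (f.symm : F →L[𝕜] E) := by
  ext y
  simp

theorem norm_comp_symm_sub_comp_symm_le (X Y : E →L[𝕜] G) (e f : E ≃L[𝕜] F) :
    ‖X.comp (e.symm : F →L[𝕜] E) - Y.comp (f.symm : F →L[𝕜] E)‖ ≤
      (‖X.comp (e.symm : F →L[𝕜] E)‖ * ‖(f : E →L[𝕜] F) - (e : E →L[𝕜] F)‖ + ‖X - Y‖) *
        ‖(f.symm : F →L[𝕜] E)‖ := by
  rw [comp_symm_sub_comp_symm]
  refine (opNorm_comp_le _ _).trans (mul_le_mul_of_nonneg_right ?_ (norm_nonneg _))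
  exact (norm_add_le _ _).trans (add_le_add_left (opNorm_comp_le _ _) _)

end ContinuousLinearEquiv

end

theorem graph_transform_derivative_contraction_general
    {P Q : Type*} [NormedAddCommGroup P] [NormedSpace ℝ P] [CompleteSpace P]
    [NormedAddCommGroup Q] [NormedSpace ℝ Q] [CompleteSpace Q]
    (a : P ≃L[ℝ] P) (b : Q →L[ℝ] P) (c : P →L[ℝ] Q) (d : Q →L[ℝ] Q)
    (δ : ℝ)
    (hsmall : ‖(a.symm : P →L[ℝ] P)‖ * ‖b‖ * δ < 1)
    (hself : (‖c‖ + ‖d‖ * δ) * ‖(a.symm : P →L[ℝ] P)‖ /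
        (1 - ‖(a.symm : P →L[ℝ] P)‖ * ‖b‖ * δ) ≤ δ) :
    (∀ T : P →L[ℝ] Q, ‖T‖ ≤ δ →
      ∃ e : P ≃L[ℝ] P, (e : P →L[ℝ] P) = (a : P →L[ℝ] P) + b.comp T) ∧
    (∀ (T S : P →L[ℝ] Q), ‖T‖ ≤ δ → ‖S‖ ≤ δ →
      ∀ (eT eS : P ≃L[ℝ] P),
        (eT : P →L[ℝ] P) = (a : P →L[ℝ] P) + b.comp T →
        (eS : P →L[ℝ] P) = (a : P →L[ℝ] P) + b.comp S →
        ‖(c + d.comp T).comp (eT.symm : P →L[ℝ] P) -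
            (c + d.comp S).comp (eS.symm : P →L[ℝ] P)‖ ≤
          (δ * ‖b‖ + ‖d‖) *
            (‖(a.symm : P →L[ℝ] P)‖ / (1 - ‖(a.symm : P →L[ℝ] P)‖ * ‖b‖ * δ)) *
            ‖T - S‖) := by
  set α := ‖(a.symm : P →L[ℝ] P)‖
  rw [mul_assoc α] at hsmall hself
  have hbT : ∀ T : P →L[ℝ] Q, ‖T‖ ≤ δ → ‖b.comp T‖ ≤ ‖b‖ * δ := fun T hT =>
    (b.opNorm_comp_le T).trans (by gcongr)
  have hinv : ∀ T : P →L[ℝ] Q, ‖T‖ ≤ δ → ∀ e : P ≃L[ℝ] P,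
      (e : P →L[ℝ] P) = (a : P →L[ℝ] P) + b.comp T →
      ‖(e.symm : P →L[ℝ] P)‖ ≤ α / (1 - α * (‖b‖ * δ)) := fun T hT e he =>
    a.norm_symm_le_of_coe_eq_add e _ he (hbT T hT) hsmall
  refine ⟨fun T hT => a.exists_coe_eq_add _ ?_, ?_⟩
  · exact (mul_le_mul_of_nonneg_left (hbT T hT) (norm_nonneg _)).trans_lt hsmall
  intro T S hT hS eT eS heT heS
  have hδ : 0 ≤ δ := (norm_nonneg T).trans hT
  have hΛT : ‖(c + d.comp T).comp (eT.symm : P →L[ℝ] P)‖ ≤ δ := calc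
    _ ≤ ‖c + d.comp T‖ * ‖(eT.symm : P →L[ℝ] P)‖ := ContinuousLinearMap.opNorm_comp_le _ _
    _ ≤ (‖c‖ + ‖d‖ * δ) * (α / (1 - α * (‖b‖ * δ))) := by
      gcongr
      · exact (norm_add_le _ _).trans (by gcongr; exact (d.opNorm_comp_le T).trans (by gcongr))
      · exact hinv T hT eT heT
    _ ≤ δ := by rwa [mul_div_assoc] at hself
  have hdiff_e : ‖(eS : P →L[ℝ] P) - eT‖ ≤ ‖b‖ * ‖T - S‖ := by
    rw [heS, heT, add_sub_add_left_eq_sub, ← ContinuousLinearMap.comp_sub, norm_sub_rev T S]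
    exact b.opNorm_comp_le _
  have hdiff_X : ‖(c + d.comp T) - (c + d.comp S)‖ ≤ ‖d‖ * ‖T - S‖ := by
    rw [add_sub_add_left_eq_sub, ← ContinuousLinearMap.comp_sub]
    exact d.opNorm_comp_le _
  calc _ ≤ _ := ContinuousLinearEquiv.norm_comp_symm_sub_comp_symm_le _ _ eT eS
    _ ≤ (δ * (‖b‖ * ‖T - S‖) + ‖d‖ * ‖T - S‖) * (α / (1 - α * (‖b‖ * δ))) := by
      gcongr
      exact hinv S hS eS heS
    _ = _ := by ring

/-- Under the smallness assumptions `‖a⁻¹‖·‖b‖·δ < 1` and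
`(‖c‖ + ‖d‖·δ)·‖a⁻¹‖/(1 − ‖a⁻¹‖·‖b‖·δ) ≤ δ`, the graph-transform derivative operator
`Λ(T) = (c + d∘T)∘(a + b∘T)⁻¹` is well defined on the `δ`-ball of linear maps `T : P → Q`
and satisfies the Lipschitz estimate
`‖Λ(T) − Λ(S)‖ ≤ (δ‖b‖ + ‖d‖)·(‖a⁻¹‖/(1 − ‖a⁻¹‖·‖b‖·δ))·‖T − S‖`. -/
theorem graph_transform_derivative_contraction
    {P Q : Type*} [NormedAddCommGroup P] [NormedSpace ℝ P] [CompleteSpace P]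
    [NormedAddCommGroup Q] [NormedSpace ℝ Q] [CompleteSpace Q]
    (a : P ≃L[ℝ] P) (b : Q →L[ℝ] P) (c : P →L[ℝ] Q) (d : Q →L[ℝ] Q)
    (δ : ℝ) (hδ : 0 < δ)
    (hsmall : ‖(a.symm : P →L[ℝ] P)‖ * ‖b‖ * δ < 1)
    (hself : (‖c‖ + ‖d‖ * δ) * ‖(a.symm : P →L[ℝ] P)‖ /
        (1 - ‖(a.symm : P →L[ℝ] P)‖ * ‖b‖ * δ) ≤ δ) :
    (∀ T : P →L[ℝ] Q, ‖T‖ ≤ δ →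
      ∃ e : P ≃L[ℝ] P, (e : P →L[ℝ] P) = (a : P →L[ℝ] P) + b.comp T) ∧
    (∀ (T S : P →L[ℝ] Q), ‖T‖ ≤ δ → ‖S‖ ≤ δ →
      ∀ (eT eS : P ≃L[ℝ] P),
        (eT : P →L[ℝ] P) = (a : P →L[ℝ] P) + b.comp T →
        (eS : P →L[ℝ] P) = (a : P →L[ℝ] P) + b.comp S →
        ‖(c + d.comp T).comp (eT.symm : P →L[ℝ] P) -
            (c + d.comp S).comp (eS.symm : P →L[ℝ] P)‖ ≤
          (δ * ‖b‖ + ‖d‖) *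
            (‖(a.symm : P →L[ℝ] P)‖ / (1 - ‖(a.symm : P →L[ℝ] P)‖ * ‖b‖ * δ)) *
            ‖T - S‖) :=
  graph_transform_derivative_contraction_general a b c d δ hsmall hself
end

section
/- Let (X, d) be a metric space, let (xₙ) and (tₙ) be sequences in X, let μ ∈ (0,1), and let (E_N) be a sequence of nonnegative real numbers converging to 0 such that d(tₙ, tₘ) ≤ E_N for all n, m ≥ N, and such that d(x_{n+1}, tₙ) ≤ μ·d(xₙ, tₙ) for all n. Then d(xₙ, tₙ) → 0 as n → ∞, and the sequence (xₙ) is Cauchy; more precisely, for all n ≥ m ≥ N one has d(xₙ, xₘ) ≤ 2μ^{m−N} d(x_N, t_N) + 2 E_N/(1 − μ) + E_N. -/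
/-- If a sequence `(xₙ)` is shadowed with contraction factor `μ < 1` by a
sequence `(tₙ)` whose mutual distances beyond index `N` are controlled by `E_N → 0`
(`d(tₙ, tₘ) ≤ E_N` for `n, m ≥ N`) via `d(x_{n+1}, tₙ) ≤ μ·d(xₙ, tₙ)`, then
`d(xₙ, tₙ) → 0`, the sequence `(xₙ)` is Cauchy, and for `N ≤ m ≤ n`,
`d(xₙ, xₘ) ≤ 2μ^{m−N} d(x_N, t_N) + 2E_N/(1 − μ) + E_N`. -/
theorem shadowing_cauchy_lemma
    {X : Type*} [MetricSpace X]
    (x t : ℕ → X) (μ : ℝ) (hμ0 : 0 < μ) (hμ1 : μ < 1)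
    (E : ℕ → ℝ) (hE0 : ∀ N, 0 ≤ E N)
    (hEtendsto : Filter.Tendsto E Filter.atTop (nhds 0))
    (ht : ∀ N n m : ℕ, N ≤ n → N ≤ m → dist (t n) (t m) ≤ E N)
    (hshadow : ∀ n : ℕ, dist (x (n + 1)) (t n) ≤ μ * dist (x n) (t n)) :
    Filter.Tendsto (fun n => dist (x n) (t n)) Filter.atTop (nhds 0) ∧
    CauchySeq x ∧
    (∀ N m n : ℕ, N ≤ m → m ≤ n →
      dist (x n) (x m) ≤
        2 * μ ^ (m - N) * dist (x N) (t N) + 2 * E N / (1 - μ) + E N) := by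
  have h1μ : (0:ℝ) < 1 - μ := by linarith
  -- key recurrence estimate
  have key : ∀ N k : ℕ, dist (x (N + k)) (t (N + k)) ≤
      μ ^ k * dist (x N) (t N) + (∑ i ∈ Finset.range k, μ ^ i) * E N := by
    intro N k
    induction k with
    | zero => simp
    | succ k ih =>
      have h1 : dist (x (N + (k+1))) (t (N + (k+1))) ≤
          dist (x (N + k + 1)) (t (N + k)) + dist (t (N + k)) (t (N + (k+1))) :=
        dist_triangle (x (N + k + 1)) (t (N + k)) (t (N + (k+1)))
      have h2 := hshadow (N + k)
      have h3 : dist (t (N + k)) (t (N + (k+1))) ≤ E N :=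
        ht N _ _ (Nat.le_add_right _ _) (Nat.le_add_right _ _)
      have hsum : (∑ i ∈ Finset.range (k+1), μ ^ i)
          = μ * (∑ i ∈ Finset.range k, μ ^ i) + 1 := geom_sum_succ
      have hd0 : 0 ≤ dist (x (N + k)) (t (N + k)) := dist_nonneg
      calc dist (x (N + (k+1))) (t (N + (k+1)))
          ≤ μ * dist (x (N + k)) (t (N + k)) + E N := by linarith
        _ ≤ μ * (μ ^ k * dist (x N) (t N) + (∑ i ∈ Finset.range k, μ ^ i) * E N) + E N := by
            nlinarith [ih, hμ0.le]
        _ = μ ^ (k+1) * dist (x N) (t N) + (∑ i ∈ Finset.range (k+1), μ ^ i) * E N := by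
            rw [hsum]; ring
  have sumbound : ∀ k : ℕ, (∑ i ∈ Finset.range k, μ ^ i) ≤ 1 / (1 - μ) := by
    intro k
    have hne : μ ≠ 1 := ne_of_lt hμ1
    rw [geom_sum_eq hne k]
    have heq : (μ ^ k - 1) / (μ - 1) = (1 - μ ^ k) / (1 - μ) := by
      rw [← neg_div_neg_eq]; ring_nf
    rw [heq, div_le_div_iff₀ h1μ h1μ]
    nlinarith [pow_nonneg hμ0.le k]
  have key2 : ∀ N k : ℕ, dist (x (N + k)) (t (N + k)) ≤
      μ ^ k * dist (x N) (t N) + E N / (1 - μ) := by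
    intro N k
    have := key N k
    have h2 : (∑ i ∈ Finset.range k, μ ^ i) * E N ≤ (1 / (1 - μ)) * E N :=
      mul_le_mul_of_nonneg_right (sumbound k) (hE0 N)
    calc dist (x (N + k)) (t (N + k))
        ≤ μ ^ k * dist (x N) (t N) + (∑ i ∈ Finset.range k, μ ^ i) * E N := this
      _ ≤ μ ^ k * dist (x N) (t N) + E N / (1 - μ) := by
          rw [div_eq_mul_one_div, mul_comm (E N)]; linarith
  have key3 : ∀ N n : ℕ, N ≤ n → dist (x n) (t n) ≤
      μ ^ (n - N) * dist (x N) (t N) + E N / (1 - μ) := by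
    intro N n hNn
    have := key2 N (n - N)
    rwa [Nat.add_sub_cancel' hNn] at this
  -- tendsto
  have htend : Filter.Tendsto (fun n => dist (x n) (t n)) Filter.atTop (nhds 0) := by
    rw [Metric.tendsto_atTop]
    intro ε hε
    obtain ⟨N, hN⟩ := (Metric.tendsto_atTop.1 hEtendsto) (ε * (1 - μ) / 2) (by positivity)
    have hEN : E N < ε * (1 - μ) / 2 := by
      have := hN N le_rfl
      rwa [Real.dist_eq, sub_zero, abs_of_nonneg (hE0 N)] at this
    have hENdiv : E N / (1 - μ) < ε / 2 := by
      rw [div_lt_iff₀ h1μ]; nlinarith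
    -- choose K so that μ^{K-N} * d(x_N, t_N) < ε/2
    have hpow : Filter.Tendsto (fun k : ℕ => μ ^ k * dist (x N) (t N)) Filter.atTop (nhds 0) := by
      have := tendsto_pow_atTop_nhds_zero_of_lt_one hμ0.le hμ1
      simpa using this.mul_const (dist (x N) (t N))
    obtain ⟨K₀, hK₀⟩ := (Metric.tendsto_atTop.1 hpow) (ε / 2) (by positivity)
    refine ⟨N + K₀, fun n hn => ?_⟩
    have hNn : N ≤ n := le_trans (Nat.le_add_right _ _) hn
    have h1 := key3 N n hNn
    have hK : K₀ ≤ n - N := by omega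
    have h2 := hK₀ (n - N) hK
    rw [Real.dist_eq, sub_zero] at h2
    have h3 : μ ^ (n - N) * dist (x N) (t N) < ε / 2 := lt_of_abs_lt h2
    rw [Real.dist_eq, sub_zero, abs_of_nonneg dist_nonneg]
    linarith
  -- main estimate
  have est : ∀ N m n : ℕ, N ≤ m → m ≤ n →
      dist (x n) (x m) ≤
        2 * μ ^ (m - N) * dist (x N) (t N) + 2 * E N / (1 - μ) + E N := by
    intro N m n hNm hmn
    have hNn : N ≤ n := le_trans hNm hmn
    have h1 := key3 N n hNn
    have h2 := key3 N m hNm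
    have h3 : dist (t n) (t m) ≤ E N := ht N n m hNn hNm
    have htri : dist (x n) (x m) ≤ dist (x n) (t n) + dist (t n) (t m) + dist (t m) (x m) :=
      dist_triangle4 _ _ _ _
    have hpowle : μ ^ (n - N) ≤ μ ^ (m - N) :=
      pow_le_pow_of_le_one hμ0.le hμ1.le (by omega)
    have hd0 : 0 ≤ dist (x N) (t N) := dist_nonneg
    have hp1 : μ ^ (n - N) * dist (x N) (t N) ≤ μ ^ (m - N) * dist (x N) (t N) :=
      mul_le_mul_of_nonneg_right hpowle hd0
    have hcomm : dist (t m) (x m) = dist (x m) (t m) := dist_comm _ _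
    rw [hcomm] at htri
    have : 2 * E N / (1 - μ) = E N / (1 - μ) + E N / (1 - μ) := by ring
    linarith
  refine ⟨htend, ?_, est⟩
  -- Cauchy
  rw [Metric.cauchySeq_iff]
  intro ε hε
  have hbound : Filter.Tendsto
      (fun N => 2 * dist (x N) (t N) + 2 * E N / (1 - μ) + E N) Filter.atTop (nhds 0) := by
    have h1 := htend.const_mul 2
    have h2 : Filter.Tendsto (fun N => 2 * E N / (1 - μ)) Filter.atTop (nhds 0) := by
      have := (hEtendsto.const_mul 2).div_const (1 - μ)
      simpa [mul_div_assoc] using this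
    have := (h1.add h2).add hEtendsto
    simpa using this
  obtain ⟨N, hN⟩ := (Metric.tendsto_atTop.1 hbound) ε hε
  refine ⟨N, fun m hm n hn => ?_⟩
  have hBd : 2 * dist (x N) (t N) + 2 * E N / (1 - μ) + E N < ε := by
    have := hN N le_rfl
    rw [Real.dist_eq, sub_zero] at this
    exact lt_of_abs_lt this
  -- wlog
  have main : ∀ a b : ℕ, N ≤ a → a ≤ b → dist (x b) (x a) < ε := by
    intro a b hNa hab
    have h := est N a b hNa hab
    have hpow : μ ^ (a - N) ≤ 1 := pow_le_one₀ hμ0.le hμ1.le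
    have hd0 : 0 ≤ dist (x N) (t N) := dist_nonneg
    nlinarith
  rcases le_total m n with h | h
  · rw [dist_comm]; exact main m n hm h
  · exact main n m hn h
end

section
/- Let H be a real normed vector space, let G : H → H and G_h : H → H be maps, and let R₀ > 0, R_h > R₀, λ > 0, τ > 0, and κ ≥ 0 be constants such that: (i) ‖G(u)‖ ≤ R₀ + e^{−λτ}(‖u‖ − R₀) for all u with ‖u‖ ≤ R_h; (ii) ‖G(u) − G_h(u)‖ ≤ κ for all u with ‖u‖ ≤ R_h; and (iii) κ < (R_h − R₀)(1 − e^{−λτ}). Define R_h^c := R₀ + κ/(1 − e^{−λτ}), so that R₀ ≤ R_h^c < R_h. Then the closed ball {u : ‖u‖ ≤ R_h} is positively invariant under G_h, and orbits of G_h starting in this ball are attracted exponentially to the ball of radius R_h^c: for every u with ‖u‖ ≤ R_h and every n ∈ ℕ, ‖G_h^n(u)‖ ≤ R_h^c + e^{−nλτ}·max(‖u‖ − R_h^c, 0). -/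
/-- If the time-`τ` map `G` contracts exponentially towards the ball of
radius `R₀` (`‖G u‖ ≤ R₀ + e^{−λτ}(‖u‖ − R₀)` on the ball of radius `R_h`), the perturbed
map `G_h` is `κ`-close to `G` there, and `κ < (R_h − R₀)(1 − e^{−λτ})`, then with
`R_h^c := R₀ + κ/(1 − e^{−λτ})` one has `R₀ ≤ R_h^c < R_h`, the ball of radius `R_h` is
positively invariant under `G_h`, and
`‖G_hⁿ(u)‖ ≤ R_h^c + e^{−nλτ}·max(‖u‖ − R_h^c, 0)` for all `‖u‖ ≤ R_h`, `n ∈ ℕ`. -/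
theorem perturbed_absorbing_ball
    {H : Type*} [NormedAddCommGroup H] [NormedSpace ℝ H]
    (G Gh : H → H) (R₀ Rh lam τ κ : ℝ)
    (hR₀ : 0 < R₀) (hRh : R₀ < Rh) (hlam : 0 < lam) (hτ : 0 < τ) (hκ : 0 ≤ κ)
    (hG : ∀ u : H, ‖u‖ ≤ Rh → ‖G u‖ ≤ R₀ + Real.exp (-(lam * τ)) * (‖u‖ - R₀))
    (hclose : ∀ u : H, ‖u‖ ≤ Rh → ‖G u - Gh u‖ ≤ κ)
    (hκsmall : κ < (Rh - R₀) * (1 - Real.exp (-(lam * τ))))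
    (Rhc : ℝ) (hRhc : Rhc = R₀ + κ / (1 - Real.exp (-(lam * τ)))) :
    (R₀ ≤ Rhc ∧ Rhc < Rh) ∧
    (∀ u : H, ‖u‖ ≤ Rh → ‖Gh u‖ ≤ Rh) ∧
    (∀ (u : H) (n : ℕ), ‖u‖ ≤ Rh →
      ‖Gh^[n] u‖ ≤ Rhc + Real.exp (-(n * lam * τ)) * max (‖u‖ - Rhc) 0) := by
  set θ := Real.exp (-(lam * τ)) with hθdef
  have hθ0 : 0 < θ := Real.exp_pos _
  have hθ1 : θ < 1 := by
    rw [hθdef]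
    have : -(lam * τ) < 0 := by nlinarith
    calc Real.exp (-(lam * τ)) < Real.exp 0 := Real.exp_lt_exp.mpr this
      _ = 1 := Real.exp_zero
  have h1θ : 0 < 1 - θ := by linarith
  have hRhc₀ : R₀ ≤ Rhc := by
    rw [hRhc]; have := div_nonneg hκ h1θ.le; linarith
  have hRhcRh : Rhc < Rh := by
    rw [hRhc]
    have : κ / (1 - θ) < Rh - R₀ := (div_lt_iff₀ h1θ).mpr (by linarith [hκsmall])
    linarith
  -- fixed point identity: R₀ + θ*(Rhc - R₀) + κ = Rhc
  have hfix : R₀ + θ * (Rhc - R₀) + κ = Rhc := by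
    rw [hRhc]; field_simp; ring
  -- key one-step estimate
  have key : ∀ u : H, ‖u‖ ≤ Rh → ‖Gh u‖ ≤ Rhc + θ * max (‖u‖ - Rhc) 0 := by
    intro u hu
    have h1 : ‖Gh u‖ ≤ ‖G u‖ + κ := by
      have h := norm_sub_norm_le (Gh u) (G u)
      rw [norm_sub_rev] at h
      have := hclose u hu
      linarith
    have h2 : ‖Gh u‖ ≤ R₀ + θ * (‖u‖ - R₀) + κ := by
      have := hG u hu; linarith
    have h3 : R₀ + θ * (‖u‖ - R₀) + κ = Rhc + θ * (‖u‖ - Rhc) := by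
      nlinarith [hfix]
    have h4 : θ * (‖u‖ - Rhc) ≤ θ * max (‖u‖ - Rhc) 0 := by
      apply mul_le_mul_of_nonneg_left (le_max_left _ _) hθ0.le
    linarith
  have hmaxle : ∀ u : H, ‖u‖ ≤ Rh → max (‖u‖ - Rhc) 0 ≤ Rh - Rhc := by
    intro u hu
    exact max_le (by linarith) (by linarith)
  have hinv : ∀ u : H, ‖u‖ ≤ Rh → ‖Gh u‖ ≤ Rh := by
    intro u hu
    have := key u hu
    have h5 : θ * max (‖u‖ - Rhc) 0 ≤ Rh - Rhc := by
      calc θ * max (‖u‖ - Rhc) 0 ≤ 1 * max (‖u‖ - Rhc) 0 := by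
            apply mul_le_mul_of_nonneg_right hθ1.le (le_max_right _ _)
        _ = max (‖u‖ - Rhc) 0 := one_mul _
        _ ≤ Rh - Rhc := hmaxle u hu
    linarith
  refine ⟨⟨hRhc₀, hRhcRh⟩, hinv, ?_⟩
  -- iterate bound with θ^n
  have main : ∀ (n : ℕ) (u : H), ‖u‖ ≤ Rh →
      ‖Gh^[n] u‖ ≤ Rhc + θ ^ n * max (‖u‖ - Rhc) 0 := by
    intro n
    induction n with
    | zero =>
      intro u hu
      simp only [Function.iterate_zero, id_eq, pow_zero, one_mul]
      have := le_max_left (‖u‖ - Rhc) 0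
      linarith
    | succ n ih =>
      intro u hu
      have hbound := ih u hu
      have hθn1 : θ ^ n ≤ 1 := pow_le_one₀ hθ0.le hθ1.le
      have hmax0 : 0 ≤ max (‖u‖ - Rhc) 0 := le_max_right _ _
      have hRhiter : ‖Gh^[n] u‖ ≤ Rh := by
        have : θ ^ n * max (‖u‖ - Rhc) 0 ≤ Rh - Rhc := by
          calc θ ^ n * max (‖u‖ - Rhc) 0 ≤ 1 * max (‖u‖ - Rhc) 0 :=
                mul_le_mul_of_nonneg_right hθn1 hmax0
            _ = _ := one_mul _
            _ ≤ Rh - Rhc := hmaxle u hu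
        linarith
      rw [Function.iterate_succ_apply']
      have h1 := key _ hRhiter
      have h2 : max (‖Gh^[n] u‖ - Rhc) 0 ≤ θ ^ n * max (‖u‖ - Rhc) 0 := by
        apply max_le (by linarith) (by positivity)
      have h3 : θ * max (‖Gh^[n] u‖ - Rhc) 0 ≤ θ * (θ ^ n * max (‖u‖ - Rhc) 0) :=
        mul_le_mul_of_nonneg_left h2 hθ0.le
      calc ‖Gh (Gh^[n] u)‖ ≤ Rhc + θ * max (‖Gh^[n] u‖ - Rhc) 0 := h1
        _ ≤ Rhc + θ * (θ ^ n * max (‖u‖ - Rhc) 0) := by linarith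
        _ = Rhc + θ ^ (n + 1) * max (‖u‖ - Rhc) 0 := by ring
  intro u n hu
  have hexp : Real.exp (-(↑n * lam * τ)) = θ ^ n := by
    rw [hθdef, ← Real.exp_nat_mul]
    ring_nf
  rw [hexp]
  exact main n u hu
end

section
/- Let H be a real Hilbert space, let R₀ > 0 and κ ≥ 0, let θ : ℝ → ℝ be a continuously differentiable function with 0 ≤ θ(x) ≤ 1 for all x, θ(x) = 1 for x ≤ 2, θ(x) = 0 for x ≥ 4, and |θ'(x)| ≤ 2 for all x, and let E : H → H be a continuously Fréchet differentiable map with ‖E(v)‖ ≤ κ and ‖DE(v)‖ ≤ κ for all v with ‖v‖ ≤ 2R₀. Define Ẽ : H → H by Ẽ(v) = θ(‖v‖²/R₀²)·E(v). Then: Ẽ is continuously Fréchet differentiable on all of H; Ẽ(v) = E(v) whenever ‖v‖ ≤ √2·R₀; ‖Ẽ(v)‖ ≤ κ for all v ∈ H; and ‖DẼ(v)‖ ≤ (1 + 8/R₀)·κ for all v ∈ H. -/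
/-!
Write `ρ(v) = θ(‖v‖²/R₀²)`, so that `Ẽ = ρ • E`. The cutoff `ρ` equals `1` on the ball of radius
`√2·R₀`, lies in `[-1, 1]`, and vanishes together with its derivative outside the ball of
radius `2R₀`; on that ball the chain rule gives `‖Dρ(v)‖ = |θ'| · 2‖v‖/R₀² ≤ 8/R₀`. The Leibniz
rule `D(ρ • E) = ρ • DE + Dρ ⊗ E` then bounds `‖DẼ‖` by `1·κ + (8/R₀)·κ`, since every product
vanishes off the ball where the bounds on `E` and `DE` are available.
-/

theorem norm_fderiv_smul_le {𝕜 X F : Type*} [NontriviallyNormedField 𝕜] [NormedAddCommGroup X]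
    [NormedSpace 𝕜 X] [NormedAddCommGroup F] [NormedSpace 𝕜 F] {c : X → 𝕜} {f : X → F} {x : X}
    (hc : DifferentiableAt 𝕜 c x) (hf : DifferentiableAt 𝕜 f x) :
    ‖fderiv 𝕜 (fun y => c y • f y) x‖ ≤ ‖c x‖ * ‖fderiv 𝕜 f x‖ + ‖fderiv 𝕜 c x‖ * ‖f x‖ := by
  rw [show (fun y => c y • f y) = c • f from rfl, fderiv_smul hc hf]
  refine (norm_add_le _ _).trans_eq ?_
  rw [norm_smul, ContinuousLinearMap.norm_smulRight_apply]

theorem norm_mul_norm_le_of_eq_zero_of_lt {X A B : Type*} [SeminormedAddCommGroup X]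
    [SeminormedAddCommGroup A] [SeminormedAddCommGroup B] {c : X → A} {g : X → B} {r C κ : ℝ}
    (hC : 0 ≤ C) (hκ : 0 ≤ κ) (hc : ∀ x, ‖x‖ ≤ r → ‖c x‖ ≤ C) (hc_zero : ∀ x, r < ‖x‖ → c x = 0)
    (hg : ∀ x, ‖x‖ ≤ r → ‖g x‖ ≤ κ) (x : X) : ‖c x‖ * ‖g x‖ ≤ C * κ := by
  rcases le_or_gt ‖x‖ r with hx | hx
  · exact mul_le_mul (hc x hx) (hg x hx) (norm_nonneg _) hC
  · rw [hc_zero x hx, norm_zero, zero_mul]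
    exact mul_nonneg hC hκ

noncomputable def radialCutoff {H : Type*} [NormedAddCommGroup H] (θ : ℝ → ℝ) (R : ℝ) (v : H) :
    ℝ :=
  θ (‖v‖ ^ 2 / R ^ 2)

namespace radialCutoff

variable {H : Type*} [NormedAddCommGroup H] {θ : ℝ → ℝ} {R : ℝ}

theorem norm_le_one (hθ : ∀ x : ℝ, 0 ≤ θ x ∧ θ x ≤ 1) (v : H) : ‖radialCutoff θ R v‖ ≤ 1 :=
  abs_le.2 ⟨(neg_nonpos.2 zero_le_one).trans (hθ _).1, (hθ _).2⟩

theorem eq_one (hθ : ∀ x : ℝ, x ≤ 2 → θ x = 1) {v : H} (hv : ‖v‖ ≤ √2 * R) :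
    radialCutoff θ R v = 1 := by
  refine hθ _ (div_le_of_le_mul₀ (sq_nonneg R) zero_le_two ?_)
  calc ‖v‖ ^ 2 ≤ (√2 * R) ^ 2 := pow_le_pow_left₀ (norm_nonneg v) hv 2
    _ = 2 * R ^ 2 := by rw [mul_pow, Real.sq_sqrt zero_le_two]

theorem eq_zero (hR : 0 < R) (hθ : ∀ x : ℝ, 4 ≤ x → θ x = 0) {v : H} (hv : 2 * R < ‖v‖) :
    radialCutoff θ R v = 0 := by
  refine hθ _ ((le_div_iff₀ (by positivity)).2 ?_)
  nlinarith

theorem fderiv_eq_zero [NormedSpace ℝ H] (hR : 0 < R) (hθ : ∀ x : ℝ, 4 ≤ x → θ x = 0) {v : H}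
    (hv : 2 * R < ‖v‖) : fderiv ℝ (radialCutoff θ R) v = 0 := by
  have hzero : radialCutoff θ R =ᶠ[nhds v] fun _ => (0 : ℝ) :=
    ((continuous_norm.tendsto v).eventually (lt_mem_nhds hv)).mono fun _ hw => eq_zero hR hθ hw
  rw [hzero.fderiv_eq, fderiv_const_apply]

variable [InnerProductSpace ℝ H]

theorem contDiff {n : WithTop ℕ∞} (hθ : ContDiff ℝ n θ) :
    ContDiff ℝ n (radialCutoff (H := H) θ R) :=
  hθ.comp ((contDiff_norm_sq ℝ).div_const _)

theorem hasFDerivAt {v : H} (hθ : DifferentiableAt ℝ θ (‖v‖ ^ 2 / R ^ 2)) :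
    HasFDerivAt (radialCutoff θ R) (deriv θ (‖v‖ ^ 2 / R ^ 2) • (2 / R ^ 2) • innerSL ℝ v) v := by
  have hsq : HasFDerivAt (fun w : H => ‖w‖ ^ 2 / R ^ 2) ((2 / R ^ 2) • innerSL ℝ v) v := by
    have := (hasStrictFDerivAt_norm_sq v).hasFDerivAt.mul_const (R ^ 2)⁻¹
    rwa [← Nat.cast_smul_eq_nsmul ℝ, smul_smul, inv_mul_eq_div, Nat.cast_ofNat] at this
  exact hθ.hasDerivAt.comp_hasFDerivAt v hsq

theorem norm_fderiv {v : H} (hθ : DifferentiableAt ℝ θ (‖v‖ ^ 2 / R ^ 2)) :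
    ‖fderiv ℝ (radialCutoff θ R) v‖ = |deriv θ (‖v‖ ^ 2 / R ^ 2)| * (2 * ‖v‖ / R ^ 2) := by
  rw [(hasFDerivAt hθ).fderiv, norm_smul, norm_smul, innerSL_apply_norm, Real.norm_eq_abs,
    Real.norm_eq_abs, abs_of_nonneg (by positivity : (0 : ℝ) ≤ 2 / R ^ 2)]
  ring

theorem norm_fderiv_le (hR : 0 < R) (hθ : Differentiable ℝ θ) (hθ' : ∀ x : ℝ, |deriv θ x| ≤ 2)
    {v : H} (hv : ‖v‖ ≤ 2 * R) : ‖fderiv ℝ (radialCutoff θ R) v‖ ≤ 8 / R := by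
  rw [norm_fderiv (hθ _)]
  calc |deriv θ (‖v‖ ^ 2 / R ^ 2)| * (2 * ‖v‖ / R ^ 2) ≤ 2 * (2 * (2 * R) / R ^ 2) := by
        gcongr
        exact hθ' _
    _ = 8 / R := by field_simp; ring

end radialCutoff

theorem truncated_perturbation_C1_close_general
    {H : Type*} [NormedAddCommGroup H] [InnerProductSpace ℝ H]
    (R₀ κ : ℝ) (hR₀ : 0 < R₀) (hκ : 0 ≤ κ)
    (θ : ℝ → ℝ) (hθC1 : ContDiff ℝ 1 θ)
    (hθ01 : ∀ x : ℝ, 0 ≤ θ x ∧ θ x ≤ 1)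
    (hθ1 : ∀ x : ℝ, x ≤ 2 → θ x = 1)
    (hθ0 : ∀ x : ℝ, 4 ≤ x → θ x = 0)
    (hθ' : ∀ x : ℝ, |deriv θ x| ≤ 2)
    (E : H → H) (hEC1 : ContDiff ℝ 1 E)
    (hE : ∀ v : H, ‖v‖ ≤ 2 * R₀ → ‖E v‖ ≤ κ)
    (hDE : ∀ v : H, ‖v‖ ≤ 2 * R₀ → ‖fderiv ℝ E v‖ ≤ κ)
    (Et : H → H) (hEt : ∀ v : H, Et v = θ (‖v‖ ^ 2 / R₀ ^ 2) • E v) :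
    ContDiff ℝ 1 Et ∧
    (∀ v : H, ‖v‖ ≤ Real.sqrt 2 * R₀ → Et v = E v) ∧
    (∀ v : H, ‖Et v‖ ≤ κ) ∧
    (∀ v : H, ‖fderiv ℝ Et v‖ ≤ (1 + 8 / R₀) * κ) := by
  obtain rfl : Et = fun v => radialCutoff θ R₀ v • E v := funext hEt
  have hθ_diff : Differentiable ℝ θ := hθC1.differentiable one_ne_zero
  have hρ : ContDiff ℝ 1 (radialCutoff (H := H) θ R₀) := radialCutoff.contDiff hθC1
  have hρ_le_one (v : H) (_ : ‖v‖ ≤ 2 * R₀) := radialCutoff.norm_le_one (R := R₀) hθ01 v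
  have hρ_zero (v : H) := radialCutoff.eq_zero (v := v) hR₀ hθ0
  have hDρ_le (v : H) := radialCutoff.norm_fderiv_le (v := v) hR₀ hθ_diff hθ'
  have hDρ_zero (v : H) := radialCutoff.fderiv_eq_zero (v := v) hR₀ hθ0
  refine ⟨hρ.smul hEC1, fun v hv => by simp only [radialCutoff.eq_one hθ1 hv, one_smul],
    fun v => ?_, fun v => ?_⟩
  · rw [norm_smul, ← one_mul κ]
    exact norm_mul_norm_le_of_eq_zero_of_lt zero_le_one hκ hρ_le_one hρ_zero hE v
  · calc ‖fderiv ℝ (fun v => radialCutoff θ R₀ v • E v) v‖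
        ≤ ‖radialCutoff θ R₀ v‖ * ‖fderiv ℝ E v‖ + ‖fderiv ℝ (radialCutoff θ R₀) v‖ * ‖E v‖ :=
          norm_fderiv_smul_le (hρ.differentiable one_ne_zero v)
            (hEC1.differentiable one_ne_zero v)
      _ ≤ 1 * κ + 8 / R₀ * κ := add_le_add
          (norm_mul_norm_le_of_eq_zero_of_lt zero_le_one hκ hρ_le_one hρ_zero hDE v)
          (norm_mul_norm_le_of_eq_zero_of_lt (by positivity) hκ hDρ_le hDρ_zero hE v)
      _ = (1 + 8 / R₀) * κ := by ring

/-- Truncating a `C¹` perturbation error `E` by the radial cutoff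
`θ(‖v‖²/R₀²)` produces a globally `C¹` map `Ẽ(v) = θ(‖v‖²/R₀²)·E(v)` which agrees with
`E` on the ball of radius `√2·R₀`, satisfies `‖Ẽ(v)‖ ≤ κ` everywhere, and
`‖DẼ(v)‖ ≤ (1 + 8/R₀)·κ` everywhere. -/
theorem truncated_perturbation_C1_close
    {H : Type*} [NormedAddCommGroup H] [InnerProductSpace ℝ H] [CompleteSpace H]
    (R₀ κ : ℝ) (hR₀ : 0 < R₀) (hκ : 0 ≤ κ)
    (θ : ℝ → ℝ) (hθC1 : ContDiff ℝ 1 θ)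
    (hθ01 : ∀ x : ℝ, 0 ≤ θ x ∧ θ x ≤ 1)
    (hθ1 : ∀ x : ℝ, x ≤ 2 → θ x = 1)
    (hθ0 : ∀ x : ℝ, 4 ≤ x → θ x = 0)
    (hθ' : ∀ x : ℝ, |deriv θ x| ≤ 2)
    (E : H → H) (hEC1 : ContDiff ℝ 1 E)
    (hE : ∀ v : H, ‖v‖ ≤ 2 * R₀ → ‖E v‖ ≤ κ)
    (hDE : ∀ v : H, ‖v‖ ≤ 2 * R₀ → ‖fderiv ℝ E v‖ ≤ κ)
    (Et : H → H) (hEt : ∀ v : H, Et v = θ (‖v‖ ^ 2 / R₀ ^ 2) • E v) :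
    ContDiff ℝ 1 Et ∧
    (∀ v : H, ‖v‖ ≤ Real.sqrt 2 * R₀ → Et v = E v) ∧
    (∀ v : H, ‖Et v‖ ≤ κ) ∧
    (∀ v : H, ‖fderiv ℝ Et v‖ ≤ (1 + 8 / R₀) * κ) :=
  truncated_perturbation_C1_close_general R₀ κ hR₀ hκ θ hθC1 hθ01 hθ1 hθ0 hθ' E hEC1 hE hDE Et hEt
end

section
/- Let H be a real normed vector space, let R' > R > 0 and K_L > 1, let G : H → H be a map, and let W₀ ⊆ {u : ‖u‖ ≤ R} be a nonempty set such that the set W := ⋃_{m∈ℕ} G^m(W₀) is contained in {u : ‖u‖ ≤ R} and has compact closure. Then for every ε > 0 there exists β > 0 with 0 < β ≤ R' − R and the following property: for every map G_h : H → H and every nonempty set W₀ʰ ⊆ H satisfying (i) ‖G(w) − G_h(z)‖ ≤ K_L‖w − z‖ + β for all w, z with ‖w‖ ≤ R' and ‖z‖ ≤ R', and (ii) for every w ∈ W₀ there exists z ∈ W₀ʰ with ‖w − z‖ ≤ β, the set W_h := ⋃_{m∈ℕ} G_h^m(W₀ʰ) satisfies dist(W, W_h) ≤ ε, where dist(A,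 B) := sup_{a∈A} inf_{b∈B} ‖a − b‖ is the asymmetric Hausdorff semi-distance. -/
/-!
Cover the relatively compact set `W` by finitely many `ε/2`-balls centred in `W`; their centres
are iterates `Gᵐ w` with `w ∈ W₀` and `m` bounded by some `N`. Starting from a point `z ∈ W₀ʰ`
that is `β`-close to `w`, the errors `dₖ = ‖Gᵏ w - G_hᵏ z‖` obey `dₖ₊₁ ≤ K_L dₖ + β`, hence
`dₖ ≤ β (k + 1) K_Lᵏ`. Choosing `β` so small that this bound is at most `min (ε/2) (R' - R)` for
`k ≤ N` keeps the perturbed orbit in the ball of radius `R'` where the comparison applies, and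
puts `G_hᵐ z ∈ W_h` within `ε` of every point of the ball around `Gᵐ w`.
-/

open Function Metric

/-- Majorant, for `1 ≤ K`, of the solution of `d₀ = β`, `dₙ₊₁ = K dₙ + β`. -/
def iterErrorBound (β K : ℝ) (n : ℕ) : ℝ := β * (n + 1) * K ^ n

section iterErrorBound

variable {β K : ℝ}

@[simp]
lemma iterErrorBound_zero : iterErrorBound β K 0 = β := by
  simp [iterErrorBound]

lemma iterErrorBound_mono (hβ : 0 ≤ β) (hK : 1 ≤ K) : Monotone (iterErrorBound β K) := by
  intro m n hmn
  unfold iterErrorBound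
  gcongr

lemma mul_iterErrorBound_add_le (hβ : 0 ≤ β) (hK : 1 ≤ K) (n : ℕ) :
    K * iterErrorBound β K n + β ≤ iterErrorBound β K (n + 1) := by
  unfold iterErrorBound
  calc K * (β * (n + 1) * K ^ n) + β ≤ K * (β * (n + 1) * K ^ n) + β * K ^ (n + 1) :=
        add_le_add_right (le_mul_of_one_le_right hβ (one_le_pow₀ hK)) _
    _ = β * ((n + 1 : ℕ) + 1) * K ^ (n + 1) := by push_cast; ring

lemma exists_pos_iterErrorBound_le (hK : 0 < K) {c : ℝ} (hc : 0 < c) (N : ℕ) :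
    ∃ β > 0, iterErrorBound β K N ≤ c := by
  have hden : (0 : ℝ) < (N + 1) * K ^ N := by positivity
  refine ⟨c / ((N + 1) * K ^ N), div_pos hc hden, le_of_eq ?_⟩
  rw [iterErrorBound, mul_assoc, div_mul_cancel₀ _ hden.ne']

end iterErrorBound

/-- The paper's `n`-step iteration estimate (4.9). -/
lemma norm_iterate_sub_iterate_le {E : Type*} [SeminormedAddCommGroup E] {G Gh : E → E}
    {K β R R' : ℝ} (hK : 1 ≤ K) (hβ : 0 ≤ β)
    (hG : ∀ w z : E, ‖w‖ ≤ R' → ‖z‖ ≤ R' → ‖G w - Gh z‖ ≤ K * ‖w - z‖ + β)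
    {w z : E} (hwz : ‖w - z‖ ≤ β) {n : ℕ} (horbit : ∀ k < n, ‖G^[k] w‖ ≤ R)
    (hn : iterErrorBound β K n ≤ R' - R) :
    ‖G^[n] w - Gh^[n] z‖ ≤ iterErrorBound β K n := by
  induction n with
  | zero => simpa using hwz
  | succ n ih =>
    have hn' : iterErrorBound β K n ≤ R' - R := (iterErrorBound_mono hβ hK n.le_succ).trans hn
    have hprev : ‖G^[n] w - Gh^[n] z‖ ≤ iterErrorBound β K n :=
      ih (fun k hk => horbit k (by omega)) hn'
    have hwR : ‖G^[n] w‖ ≤ R := horbit n n.lt_succ_self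
    have hRR' : R ≤ R' := by linarith [norm_nonneg (G^[n] w - Gh^[n] z)]
    have hzR' : ‖Gh^[n] z‖ ≤ R' := by
      linarith [norm_le_insert' (Gh^[n] z) (G^[n] w), norm_sub_rev (G^[n] w) (Gh^[n] z)]
    rw [iterate_succ_apply', iterate_succ_apply']
    calc ‖G (G^[n] w) - Gh (Gh^[n] z)‖ ≤ K * ‖G^[n] w - Gh^[n] z‖ + β :=
          hG _ _ (hwR.trans hRR') hzR'
      _ ≤ K * iterErrorBound β K n + β := by gcongr
      _ ≤ iterErrorBound β K (n + 1) := mul_iterErrorBound_add_le hβ hK n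

lemma TotallyBounded.exists_forall_mem_iUnion_exists_dist_lt {α : Type*} [PseudoMetricSpace α]
    {A : ℕ → Set α} (hA : TotallyBounded (⋃ m, A m)) {ε : ℝ} (hε : 0 < ε) :
    ∃ N, ∀ u ∈ ⋃ m, A m, ∃ m ≤ N, ∃ v ∈ A m, dist u v < ε := by
  obtain ⟨t, hts, htf, hcover⟩ := finite_approx_of_totallyBounded hA ε hε
  have hstage : ∀ p ∈ t, ∃ m, p ∈ A m := fun p hp => Set.mem_iUnion.1 (hts hp)
  choose! stage hstage using hstage
  refine ⟨htf.toFinset.sup stage, fun u hu => ?_⟩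
  obtain ⟨p, hp, hup⟩ := Set.mem_iUnion₂.1 (hcover hu)
  exact ⟨stage p, Finset.le_sup (htf.mem_toFinset.2 hp), p, hstage p hp, hup⟩

theorem unstable_set_lower_semicontinuous_general
    {H : Type*} [NormedAddCommGroup H]
    (G : H → H) (R R' KL : ℝ) (hRR' : R < R') (hKL : 1 < KL)
    (W₀ : Set H)
    (hWsub : (⋃ m : ℕ, G^[m] '' W₀) ⊆ {u : H | ‖u‖ ≤ R})
    (hWcompact : IsCompact (closure (⋃ m : ℕ, G^[m] '' W₀))) :
    ∀ ε > 0, ∃ β > 0, β ≤ R' - R ∧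
      ∀ (Gh : H → H) (W₀h : Set H), W₀h.Nonempty →
        (∀ w z : H, ‖w‖ ≤ R' → ‖z‖ ≤ R' → ‖G w - Gh z‖ ≤ KL * ‖w - z‖ + β) →
        (∀ w ∈ W₀, ∃ z ∈ W₀h, ‖w - z‖ ≤ β) →
        ∀ u ∈ ⋃ m : ℕ, G^[m] '' W₀,
          Metric.infDist u (⋃ m : ℕ, Gh^[m] '' W₀h) ≤ ε := by
  intro ε hε
  obtain ⟨N, hnet⟩ := (hWcompact.totallyBounded.subset
    subset_closure).exists_forall_mem_iUnion_exists_dist_lt (half_pos hε)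
  obtain ⟨β, hβ, hβN⟩ := exists_pos_iterErrorBound_le (zero_lt_one.trans hKL)
    (lt_min (half_pos hε) (sub_pos.2 hRR')) N
  have hmono := iterErrorBound_mono hβ.le hKL.le
  refine ⟨β, hβ, ?_, fun Gh W₀h _ hG hclose u hu => ?_⟩
  · simpa using (hmono N.zero_le).trans (hβN.trans (min_le_right _ _))
  obtain ⟨m, hmN, _, ⟨w, hw, rfl⟩, huv⟩ := hnet u hu
  obtain ⟨z, hz, hwz⟩ := hclose w hw
  have hshadow : ‖G^[m] w - Gh^[m] z‖ ≤ ε / 2 := by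
    have hbound := (hmono hmN).trans hβN
    exact (norm_iterate_sub_iterate_le hKL.le hβ.le hG hwz
      (fun k _ => hWsub (Set.mem_iUnion.2 ⟨k, w, hw, rfl⟩))
      (hbound.trans (min_le_right _ _))).trans (hbound.trans (min_le_left _ _))
  calc Metric.infDist u (⋃ m : ℕ, Gh^[m] '' W₀h)
      ≤ dist u (Gh^[m] z) := infDist_le_dist_of_mem (Set.mem_iUnion.2 ⟨m, z, hz, rfl⟩)
    _ ≤ dist u (G^[m] w) + dist (G^[m] w) (Gh^[m] z) := dist_triangle _ _ _
    _ ≤ ε / 2 + ε / 2 := add_le_add huv.le (by rwa [dist_eq_norm])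
    _ = ε := add_halves ε

/-- Lower semi-continuity of global unstable sets: if
`W = ⋃ₘ Gᵐ(W₀)` is contained in the ball of radius `R < R'` and is relatively compact,
then for every `ε > 0` there is `β > 0` with `β ≤ R' − R` such that whenever `G_h` is
`β`-close to `G` in the Lipschitz-plus-error sense on the ball of radius `R'` and `W₀ʰ`
is `β`-close to `W₀`, every point of `W` lies within `ε` of `W_h = ⋃ₘ G_hᵐ(W₀ʰ)`. -/
theorem unstable_set_lower_semicontinuous
    {H : Type*} [NormedAddCommGroup H] [NormedSpace ℝ H]
    (G : H → H) (R R' KL : ℝ) (hR : 0 < R) (hRR' : R < R') (hKL : 1 < KL)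
    (W₀ : Set H) (hW₀ne : W₀.Nonempty) (hW₀ : W₀ ⊆ {u : H | ‖u‖ ≤ R})
    (hWsub : (⋃ m : ℕ, G^[m] '' W₀) ⊆ {u : H | ‖u‖ ≤ R})
    (hWcompact : IsCompact (closure (⋃ m : ℕ, G^[m] '' W₀))) :
    ∀ ε > 0, ∃ β > 0, β ≤ R' - R ∧
      ∀ (Gh : H → H) (W₀h : Set H), W₀h.Nonempty →
        (∀ w z : H, ‖w‖ ≤ R' → ‖z‖ ≤ R' → ‖G w - Gh z‖ ≤ KL * ‖w - z‖ + β) →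
        (∀ w ∈ W₀, ∃ z ∈ W₀h, ‖w - z‖ ≤ β) →
        ∀ u ∈ ⋃ m : ℕ, G^[m] '' W₀,
          Metric.infDist u (⋃ m : ℕ, Gh^[m] '' W₀h) ≤ ε :=
  unstable_set_lower_semicontinuous_general G R R' KL hRR' hKL W₀ hWsub hWcompact
end

section
/- Let P be a real Banach space and Q a nonempty set, let r > r' > 0 and 0 ≤ k < 1, let u : {x ∈ P : ‖x‖ ≤ r} → Q be a map, and let G¹ : P × Q → P and G² : P × Q → Q be maps. Define f(x) := G¹(x, u(x)) for ‖x‖ ≤ r, and assume ‖(f(x) − x) − (f(x') − x')‖ ≤ k‖x − x'‖ for all x, x' with ‖x‖ ≤ r and ‖x'‖ ≤ r, and ‖f(0)‖ ≤ (1 − k)r − r'. Then: (a) f is injective on {x : ‖x‖ ≤ r}, with ‖f(x) − f(x')‖ ≥ (1 − k)‖x − x'‖; (b) for every ξ ∈ P with ‖ξ‖ ≤ r' there exists a unique x with ‖x‖ ≤ r and f(x) = ξ; and consequently (c) there exists a unique map v : {ξ ∈ P : ‖ξ‖ ≤ r'} → Q such that for every ξ with ‖ξ‖ ≤ r' there is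 a (unique) x with ‖x‖ ≤ r, G¹(x, u(x)) = ξ, and G²(x, u(x)) = v(ξ); that is, the image under (G¹, G²) of the graph of u, restricted over the ball of radius r', is the graph of a map v. -/
/-- If the base component `f(x) = G¹(x, u(x))` of the graph transform
is a Lipschitz-small perturbation of the identity on the ball of radius `r`
(`‖(f(x) − x) − (f(x') − x')‖ ≤ k‖x − x'‖` with `k < 1`, and `‖f(0)‖ ≤ (1 − k)r − r'`),
then: (a) `f` expands distances by at least `1 − k` (hence is injective) on the ball of
radius `r`; (b) every `ξ` in the ball of radius `r'` has a unique preimage in the ball of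
radius `r`; and (c) the image of the graph of `u` under `(G¹, G²)`, over the ball of
radius `r'`, is the graph of a unique map `v`. -/
theorem graph_transform_is_section
    {P : Type*} [NormedAddCommGroup P] [NormedSpace ℝ P] [CompleteSpace P]
    {Q : Type*} [Nonempty Q]
    (r r' k : ℝ) (hr' : 0 < r') (hrr' : r' < r) (hk0 : 0 ≤ k) (hk1 : k < 1)
    (u : P → Q) (G₁ : P × Q → P) (G₂ : P × Q → Q)
    (hlip : ∀ x x' : P, ‖x‖ ≤ r → ‖x'‖ ≤ r →
      ‖(G₁ (x, u x) - x) - (G₁ (x', u x') - x')‖ ≤ k * ‖x - x'‖)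
    (h0 : ‖G₁ (0, u 0)‖ ≤ (1 - k) * r - r') :
    (∀ x x' : P, ‖x‖ ≤ r → ‖x'‖ ≤ r →
      (1 - k) * ‖x - x'‖ ≤ ‖G₁ (x, u x) - G₁ (x', u x')‖ ∧
      (G₁ (x, u x) = G₁ (x', u x') → x = x')) ∧
    (∀ ξ : P, ‖ξ‖ ≤ r' → ∃! x : P, ‖x‖ ≤ r ∧ G₁ (x, u x) = ξ) ∧
    (∃! v : {ξ : P // ‖ξ‖ ≤ r'} → Q, ∀ ξ : {ξ : P // ‖ξ‖ ≤ r'},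
      ∃ x : P, ‖x‖ ≤ r ∧ G₁ (x, u x) = (ξ : P) ∧ G₂ (x, u x) = v ξ) := by
  have hr : (0:ℝ) < r := hr'.trans hrr'
  set f : P → P := fun x => G₁ (x, u x) with hf
  -- (a) expansion
  have expand : ∀ x x' : P, ‖x‖ ≤ r → ‖x'‖ ≤ r →
      (1 - k) * ‖x - x'‖ ≤ ‖f x - f x'‖ := by
    intro x x' hx hx'
    have h := hlip x x' hx hx'
    have heq : (f x - x) - (f x' - x') = (f x - f x') - (x - x') := by abel
    rw [heq] at h
    have h2 : ‖x - x'‖ - ‖f x - f x'‖ ≤ ‖(f x - f x') - (x - x')‖ := by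
      have := norm_sub_norm_le (x - x') (f x - f x')
      have h3 : ‖(x - x') - (f x - f x')‖ = ‖(f x - f x') - (x - x')‖ := norm_sub_rev _ _
      linarith
    nlinarith
  have inj : ∀ x x' : P, ‖x‖ ≤ r → ‖x'‖ ≤ r → f x = f x' → x = x' := by
    intro x x' hx hx' hfe
    have h := expand x x' hx hx'
    rw [hfe, sub_self, norm_zero] at h
    have : ‖x - x'‖ ≤ 0 := by nlinarith
    have : x - x' = 0 := by
      rw [← norm_le_zero_iff]; exact this
    exact sub_eq_zero.mp this
  -- (b) existence via Banach fixed point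
  have exu : ∀ ξ : P, ‖ξ‖ ≤ r' → ∃! x : P, ‖x‖ ≤ r ∧ f x = ξ := by
    intro ξ hξ
    have hball : ∀ x : P, ‖x‖ ≤ r → ‖ξ - (f x - x)‖ ≤ r := by
      intro x hx
      have h := hlip x 0 hx (by simp [hr.le])
      simp only [sub_zero, norm_zero] at h
      have heq : ξ - (f x - x) = ξ - ((f x - x) - (G₁ (0, u 0) - 0)) - G₁ (0, u 0) := by
        abel
      calc ‖ξ - (f x - x)‖
          ≤ ‖ξ‖ + ‖(f x - x) - (G₁ (0, u 0) - 0)‖ + ‖G₁ (0, u 0)‖ := by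
            rw [heq]
            refine (norm_sub_le _ _).trans ?_
            gcongr
            exact norm_sub_le _ _
        _ ≤ r' + k * ‖x‖ + ((1 - k) * r - r') := by
            gcongr
            simpa using h
        _ ≤ r := by nlinarith
    -- contraction on the closed ball
    haveI : CompleteSpace (Metric.closedBall (0:P) r) :=
      Metric.isClosed_closedBall.completeSpace_coe
    haveI : Nonempty (Metric.closedBall (0:P) r) :=
      ⟨⟨0, by simp [hr.le]⟩⟩
    have hmem : ∀ z : Metric.closedBall (0:P) r, ‖(z:P)‖ ≤ r := fun z => by
      rw [← dist_zero_right]; exact Metric.mem_closedBall.mp z.2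
    set g : Metric.closedBall (0:P) r → Metric.closedBall (0:P) r :=
      fun x => ⟨ξ - (f x.1 - x.1), by
        rw [Metric.mem_closedBall, dist_zero_right]
        exact hball x.1 (hmem x)⟩
      with hg
    have hgs : ContractingWith ⟨k, hk0⟩ g := by
      refine ⟨by exact_mod_cast hk1, LipschitzWith.of_dist_le_mul fun x y => ?_⟩
      have h := hlip x.1 y.1 (hmem x) (hmem y)
      have hd : dist (g x) (g y) = dist ((g x : P)) ((g y : P)) := rfl
      rw [hd]
      simp only [hg, dist_eq_norm]
      have heq : ξ - (f x.1 - x.1) - (ξ - (f y.1 - y.1))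
          = -((f x.1 - x.1) - (f y.1 - y.1)) := by abel
      rw [heq, norm_neg]
      rw [Subtype.dist_eq, dist_eq_norm]
      exact_mod_cast h
    set x := ContractingWith.fixedPoint g hgs with hxdef
    have hxfix : g x = x := hgs.fixedPoint_isFixedPt
    have hxr : ‖(x:P)‖ ≤ r := hmem x
    have h2 : ξ - (f x.1 - x.1) = x.1 := congrArg Subtype.val hxfix
    rw [sub_eq_iff_eq_add] at h2
    have hfx : f x.1 = ξ := by rw [h2]; abel
    refine ⟨x.1, ⟨hxr, hfx⟩, ?_⟩
    rintro y ⟨hy, hfy⟩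
    exact inj y x.1 hy hxr (by rw [hfy, hfx])
  refine ⟨fun x x' hx hx' => ⟨expand x x' hx hx', inj x x' hx hx'⟩, exu, ?_⟩
  -- (c)
  have hchoice : ∀ ξ : {ξ : P // ‖ξ‖ ≤ r'}, ∃ x : P, ‖x‖ ≤ r ∧ f x = (ξ:P) :=
    fun ξ => (exu ξ.1 ξ.2).exists
  choose w hw1 hw2 using hchoice
  refine ⟨fun ξ => G₂ (w ξ, u (w ξ)), fun ξ => ⟨w ξ, hw1 ξ, hw2 ξ, rfl⟩, ?_⟩
  intro v' hv'
  funext ξ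
  obtain ⟨x, hx, hfx, hgx⟩ := hv' ξ
  have : x = w ξ := inj x (w ξ) hx (hw1 ξ) (hfx.trans (hw2 ξ).symm)
  rw [← hgx, this]
end
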